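/- If f_1, f_2: (0,∞) → (0,∞) are concave, then for all 0 ≤ i ≤ n, [D_{f⃗}(P⃗,Q⃗; i)]^n ≤ [f_1(1)]^i · [f_2(1)]^{n−i}. -/

import Mathlib

open MeasureTheory

/-- A concave function on `(0,∞)` has a supporting line at `1`. -/
lemma exists_supporting_line {f : ℝ → ℝ} (hf : ConcaveOn ℝ (Set.Ioi (0:ℝ)) f) :
    ∃ c : ℝ, ∀ t ∈ Set.Ioi (0:ℝ), f t ≤ f 1 + c * (t - 1) := by
  set S : Set ℝ := (fun t => (f t - f 1) / (t - 1)) '' Set.Ioi (1:ℝ) with hS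
  have hne : S.Nonempty := ⟨(f 2 - f 1) / (2 - 1), ⟨2, by norm_num, rfl⟩⟩
  have half_mem : (1/2 : ℝ) ∈ Set.Ioi (0:ℝ) := by norm_num
  have hub : ∀ z ∈ S, z ≤ (f 1 - f (1/2)) / (1 - 1/2) := by
    rintro z ⟨t, ht, rfl⟩
    exact hf.slope_anti_adjacent half_mem (Set.mem_Ioi.mpr (lt_trans one_pos ht)) (by norm_num) ht
  have hbdd : BddAbove S := ⟨_, hub⟩
  refine ⟨sSup S, fun t ht => ?_⟩
  rcases lt_trichotomy t 1 with hlt | heq | hgt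
  · have hc : sSup S ≤ (f 1 - f t) / (1 - t) := by
      refine csSup_le hne ?_
      rintro z ⟨s, hs, rfl⟩
      exact hf.slope_anti_adjacent ht (Set.mem_Ioi.mpr (lt_trans one_pos hs)) hlt hs
    have h1t : (0:ℝ) < 1 - t := by linarith
    have := (le_div_iff₀ h1t).mp hc
    linarith
  · simp [heq]
  · have hc : (f t - f 1) / (t - 1) ≤ sSup S := le_csSup hbdd ⟨t, hgt, rfl⟩
    have ht1 : (0:ℝ) < t - 1 := by linarith
    have := (div_le_iff₀ ht1).mp hc
    linarith

/-- Jensen: `∫ f(p/q)·q ≤ f 1` for concave `f` on `(0,∞)`. -/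
lemma jensen_aux {X : Type*} [MeasurableSpace X] (μ : Measure X)
    {f : ℝ → ℝ} (hf : ConcaveOn ℝ (Set.Ioi (0:ℝ)) f) {p q : X → ℝ}
    (hp0 : ∀ x, 0 ≤ p x) (hq0 : ∀ x, 0 ≤ q x)
    (hp1 : ∫ x, p x ∂μ = 1) (hq1 : ∫ x, q x ∂μ = 1)
    (hpne : ∀ᵐ x ∂μ, p x ≠ 0) (hqne : ∀ᵐ x ∂μ, q x ≠ 0)
    (hint : Integrable (fun x => f (p x / q x) * q x) μ) :
    ∫ x, f (p x / q x) * q x ∂μ ≤ f 1 := by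
  obtain ⟨c, hc⟩ := exists_supporting_line hf
  have hip : Integrable p μ := by
    by_contra h; rw [integral_undef h] at hp1; norm_num at hp1
  have hiq : Integrable q μ := by
    by_contra h; rw [integral_undef h] at hq1; norm_num at hq1
  have hbound : ∀ᵐ x ∂μ, f (p x / q x) * q x ≤ f 1 * q x + c * (p x - q x) := by
    filter_upwards [hpne, hqne] with x hpx hqx
    have hqpos : 0 < q x := lt_of_le_of_ne (hq0 x) (Ne.symm hqx)
    have hppos : 0 < p x := lt_of_le_of_ne (hp0 x) (Ne.symm hpx)
    have ht : p x / q x ∈ Set.Ioi (0:ℝ) := div_pos hppos hqpos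
    have := hc _ ht
    have h2 : f (p x / q x) * q x ≤ (f 1 + c * (p x / q x - 1)) * q x :=
      mul_le_mul_of_nonneg_right this (hq0 x)
    have h3 : (p x / q x) * q x = p x := div_mul_cancel₀ _ (ne_of_gt hqpos)
    calc f (p x / q x) * q x ≤ (f 1 + c * (p x / q x - 1)) * q x := h2
      _ = f 1 * q x + c * ((p x / q x) * q x - q x) := by ring
      _ = f 1 * q x + c * (p x - q x) := by rw [h3]
  have hpq : Integrable (fun x => p x - q x) μ := hip.sub hiq
  have hint2 : Integrable (fun x => f 1 * q x + c * (p x - q x)) μ :=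
    (hiq.const_mul (f 1)).add (hpq.const_mul c)
  calc ∫ x, f (p x / q x) * q x ∂μ ≤ ∫ x, (f 1 * q x + c * (p x - q x)) ∂μ :=
        integral_mono_ae hint hint2 hbound
    _ = f 1 * ∫ x, q x ∂μ + c * ((∫ x, p x ∂μ) - ∫ x, q x ∂μ) := by
        rw [integral_add (hiq.const_mul (f 1)) (hpq.const_mul c),
          integral_const_mul, integral_const_mul, integral_sub hip hiq]
    _ = f 1 := by rw [hp1, hq1]; ring

/-- If `f₁, f₂ : (0,∞) → (0,∞)` are concave, then for all `0 ≤ i ≤ n`,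
`[D_{f⃗}(P⃗,Q⃗; i)]^n ≤ [f₁(1)]^i · [f₂(1)]^{n−i}`. -/
theorem ith_mixed_f_divergence_le_concave
    {X : Type*} [MeasurableSpace X] (μ : Measure X) [IsFiniteMeasure μ]
    (n : ℕ) (hn : 0 < n) (f₁ f₂ : ℝ → ℝ) (p₁ p₂ q₁ q₂ : X → ℝ)
    (hfpos₁ : ∀ t ∈ Set.Ioi (0:ℝ), 0 < f₁ t) (hfpos₂ : ∀ t ∈ Set.Ioi (0:ℝ), 0 < f₂ t)
    (hf₁ : ConcaveOn ℝ (Set.Ioi (0:ℝ)) f₁) (hf₂ : ConcaveOn ℝ (Set.Ioi (0:ℝ)) f₂)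
    (hpm₁ : Measurable p₁) (hpm₂ : Measurable p₂)
    (hqm₁ : Measurable q₁) (hqm₂ : Measurable q₂)
    (hp0₁ : ∀ x, 0 ≤ p₁ x) (hp0₂ : ∀ x, 0 ≤ p₂ x)
    (hq0₁ : ∀ x, 0 ≤ q₁ x) (hq0₂ : ∀ x, 0 ≤ q₂ x)
    (hp1₁ : ∫ x, p₁ x ∂μ = 1) (hp1₂ : ∫ x, p₂ x ∂μ = 1)
    (hq1₁ : ∫ x, q₁ x ∂μ = 1) (hq1₂ : ∫ x, q₂ x ∂μ = 1)
    (hpne₁ : ∀ᵐ x ∂μ, p₁ x ≠ 0) (hpne₂ : ∀ᵐ x ∂μ, p₂ x ≠ 0)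
    (hqne₁ : ∀ᵐ x ∂μ, q₁ x ≠ 0) (hqne₂ : ∀ᵐ x ∂μ, q₂ x ≠ 0)
    (hint₁ : Integrable (fun x => f₁ (p₁ x / q₁ x) * q₁ x) μ)
    (hint₂ : Integrable (fun x => f₂ (p₂ x / q₂ x) * q₂ x) μ)
    (i : ℝ) (hi0 : 0 ≤ i) (hin : i ≤ n) :
    (∫ x, (f₁ (p₁ x / q₁ x) * q₁ x) ^ (i / n)
        * (f₂ (p₂ x / q₂ x) * q₂ x) ^ ((n - i) / n) ∂μ) ^ (n : ℝ)
      ≤ (f₁ 1) ^ i * (f₂ 1) ^ ((n : ℝ) - i) := by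
  have hnR : (0:ℝ) < n := Nat.cast_pos.mpr hn
  have hnne : (n:ℝ) ≠ 0 := ne_of_gt hnR
  have hf1pos : 0 < f₁ 1 := hfpos₁ 1 (by norm_num)
  have hf2pos : 0 < f₂ 1 := hfpos₂ 1 (by norm_num)
  have hni : 0 ≤ (n:ℝ) - i := sub_nonneg.mpr hin
  have he₁ : 0 ≤ i / n := div_nonneg hi0 hnR.le
  have he₂ : 0 ≤ ((n:ℝ) - i) / n := div_nonneg hni hnR.le
  set g₁ : X → ℝ := fun x => f₁ (p₁ x / q₁ x) * q₁ x with hg₁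
  set g₂ : X → ℝ := fun x => f₂ (p₂ x / q₂ x) * q₂ x with hg₂
  have hg1nn : ∀ᵐ x ∂μ, 0 ≤ g₁ x := by
    filter_upwards [hpne₁, hqne₁] with x hpx hqx
    have hqpos : 0 < q₁ x := lt_of_le_of_ne (hq0₁ x) (Ne.symm hqx)
    have hppos : 0 < p₁ x := lt_of_le_of_ne (hp0₁ x) (Ne.symm hpx)
    exact le_of_lt (mul_pos (hfpos₁ _ (div_pos hppos hqpos)) hqpos)
  have hg2nn : ∀ᵐ x ∂μ, 0 ≤ g₂ x := by
    filter_upwards [hpne₂, hqne₂] with x hpx hqx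
    have hqpos : 0 < q₂ x := lt_of_le_of_ne (hq0₂ x) (Ne.symm hqx)
    have hppos : 0 < p₂ x := lt_of_le_of_ne (hp0₂ x) (Ne.symm hpx)
    exact le_of_lt (mul_pos (hfpos₂ _ (div_pos hppos hqpos)) hqpos)
  have hB₁0 : 0 ≤ ∫ x, g₁ x ∂μ := integral_nonneg_of_ae hg1nn
  have hB₂0 : 0 ≤ ∫ x, g₂ x ∂μ := integral_nonneg_of_ae hg2nn
  have hB₁ : ∫ x, g₁ x ∂μ ≤ f₁ 1 :=
    jensen_aux μ hf₁ hp0₁ hq0₁ hp1₁ hq1₁ hpne₁ hqne₁ hint₁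
  have hB₂ : ∫ x, g₂ x ∂μ ≤ f₂ 1 :=
    jensen_aux μ hf₂ hp0₂ hq0₂ hp1₂ hq1₂ hpne₂ hqne₂ hint₂
  have hhnn : ∀ᵐ x ∂μ, 0 ≤ g₁ x ^ (i / n) * g₂ x ^ (((n:ℝ) - i) / n) := by
    filter_upwards [hg1nn, hg2nn] with x h1 h2
    exact mul_nonneg (Real.rpow_nonneg h1 _) (Real.rpow_nonneg h2 _)
  by_cases hI : Integrable (fun x => g₁ x ^ (i / n) * g₂ x ^ (((n:ℝ) - i) / n)) μ
  · -- main case: Hölder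
    have hkey : ∫ x, g₁ x ^ (i / n) * g₂ x ^ (((n:ℝ) - i) / n) ∂μ
        ≤ (∫ x, g₁ x ∂μ) ^ (i / n) * (∫ x, g₂ x ∂μ) ^ (((n:ℝ) - i) / n) := by
      rw [integral_eq_lintegral_of_nonneg_ae hhnn hI.aestronglyMeasurable]
      have hL : ∫⁻ x, ENNReal.ofReal (g₁ x ^ (i / n) * g₂ x ^ (((n:ℝ) - i) / n)) ∂μ
          = ∫⁻ x, (ENNReal.ofReal (g₁ x)) ^ (i / n)
              * (ENNReal.ofReal (g₂ x)) ^ (((n:ℝ) - i) / n) ∂μ := by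
        refine lintegral_congr_ae ?_
        filter_upwards [hg1nn, hg2nn] with x h1 h2
        rw [ENNReal.ofReal_mul (Real.rpow_nonneg h1 _),
          ENNReal.ofReal_rpow_of_nonneg h1 he₁, ENNReal.ofReal_rpow_of_nonneg h2 he₂]
      rw [hL]
      have hH := ENNReal.lintegral_mul_norm_pow_le
        (μ := μ) (f := fun x => ENNReal.ofReal (g₁ x)) (g := fun x => ENNReal.ofReal (g₂ x))
        (hint₁.aemeasurable.ennreal_ofReal) (hint₂.aemeasurable.ennreal_ofReal)
        he₁ he₂ (by field_simp; ring)
      have hL₁ : ∫⁻ x, ENNReal.ofReal (g₁ x) ∂μ = ENNReal.ofReal (∫ x, g₁ x ∂μ) :=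
        (ofReal_integral_eq_lintegral_ofReal hint₁ hg1nn).symm
      have hL₂ : ∫⁻ x, ENNReal.ofReal (g₂ x) ∂μ = ENNReal.ofReal (∫ x, g₂ x ∂μ) :=
        (ofReal_integral_eq_lintegral_ofReal hint₂ hg2nn).symm
      rw [hL₁, hL₂] at hH
      have htop : ENNReal.ofReal (∫ x, g₁ x ∂μ) ^ (i / n)
          * ENNReal.ofReal (∫ x, g₂ x ∂μ) ^ (((n:ℝ) - i) / n) ≠ ⊤ :=
        ENNReal.mul_ne_top (ENNReal.rpow_ne_top_of_nonneg he₁ ENNReal.ofReal_ne_top)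
          (ENNReal.rpow_ne_top_of_nonneg he₂ ENNReal.ofReal_ne_top)
      calc (∫⁻ x, (ENNReal.ofReal (g₁ x)) ^ (i / n)
              * (ENNReal.ofReal (g₂ x)) ^ (((n:ℝ) - i) / n) ∂μ).toReal
          ≤ (ENNReal.ofReal (∫ x, g₁ x ∂μ) ^ (i / n)
              * ENNReal.ofReal (∫ x, g₂ x ∂μ) ^ (((n:ℝ) - i) / n)).toReal :=
            ENNReal.toReal_mono htop hH
        _ = (∫ x, g₁ x ∂μ) ^ (i / n) * (∫ x, g₂ x ∂μ) ^ (((n:ℝ) - i) / n) := by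
            rw [ENNReal.toReal_mul, ← ENNReal.toReal_rpow, ← ENNReal.toReal_rpow,
              ENNReal.toReal_ofReal hB₁0, ENNReal.toReal_ofReal hB₂0]
    have hA0 : 0 ≤ ∫ x, g₁ x ^ (i / n) * g₂ x ^ (((n:ℝ) - i) / n) ∂μ :=
      integral_nonneg_of_ae hhnn
    calc (∫ x, g₁ x ^ (i / n) * g₂ x ^ (((n:ℝ) - i) / n) ∂μ) ^ (n:ℝ)
        ≤ ((∫ x, g₁ x ∂μ) ^ (i / n) * (∫ x, g₂ x ∂μ) ^ (((n:ℝ) - i) / n)) ^ (n:ℝ) :=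
          Real.rpow_le_rpow hA0 hkey hnR.le
      _ = (∫ x, g₁ x ∂μ) ^ i * (∫ x, g₂ x ∂μ) ^ ((n:ℝ) - i) := by
          rw [Real.mul_rpow (Real.rpow_nonneg hB₁0 _) (Real.rpow_nonneg hB₂0 _),
            ← Real.rpow_mul hB₁0, ← Real.rpow_mul hB₂0,
            div_mul_cancel₀ _ hnne, div_mul_cancel₀ _ hnne]
      _ ≤ (f₁ 1) ^ i * (f₂ 1) ^ ((n:ℝ) - i) :=
          mul_le_mul (Real.rpow_le_rpow hB₁0 hB₁ hi0)
            (Real.rpow_le_rpow hB₂0 hB₂ hni)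
            (Real.rpow_nonneg hB₂0 _) (Real.rpow_nonneg hf1pos.le _)
  · rw [integral_undef hI, Real.zero_rpow hnne]
    positivity
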